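/- arXiv:math/0403499 — 3 statements merged into one kernel-verified Lean document; each statement's English description precedes it below -/
import Mathlib

section
/- Let (W_t)_{t≥0} be a standard real Brownian motion on a probability space. Let (τ_s)_{s≥0} be a family of nonnegative random variables such that for almost every sample point the map s ↦ τ_s is nondecreasing and continuous, and let (A_s)_{s≥0} be a real-valued stochastic process. Assume that almost surely on the event {lim_{s→∞} τ_s = +∞} one has liminf_{s→∞} A_s/τ_s > 0. Then almost surely on the event {lim_{s→∞} τ_s = +∞} one has lim_{s→∞} (W_{τ_s} + A_s) = +∞. -/
open MeasureTheory ProbabilityTheory Filter Real Topology Asymptotics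
open scoped ENNReal NNReal

/-!
Since `A_s ≥ a τ_s` eventually for some `a > 0`, it suffices that `W_t = o(t)` almost surely.
The Gaussian tail gives `P(|W_t - W_s| ≥ a) ≤ 16 (t - s)² / a⁴`, which is summable both over the
integer points, `|W_n - W_0| ≥ δ (n + 1)`, and over the `2^m` dyadic increments of level `m` in
`[n, n + 1]` at scale `δ (n + 1) (7/8)^m`. By Borel–Cantelli all these bounds eventually hold, and
chaining through the dyadic points and continuity bound `|W_t - W_0|` by `O(δ n)` on `[n, n + 1]`.
-/

lemma abs_sub_le_sum_of_dyadic_increments {f : ℝ → ℝ} {x : ℝ} {a : ℕ → ℝ} (ha : ∀ m, 0 ≤ a m)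
    (hf : ∀ m k : ℕ, k < 2 ^ m → |f (x + (k + 1) / 2 ^ m) - f (x + k / 2 ^ m)| ≤ a m) :
    ∀ M k : ℕ, k ≤ 2 ^ M → |f (x + k / 2 ^ M) - f x| ≤ ∑ m ∈ Finset.range (M + 1), a m := by
  intro M
  induction M with
  | zero =>
    intro k hk
    interval_cases k
    · simpa using ha 0
    · simpa using hf 0 0 one_pos
  | succ M ih =>
    intro k hk
    have hj : k / 2 ≤ 2 ^ M := Nat.div_le_of_le_mul (by rwa [← pow_succ'])
    -- the level-`M` point `k / 2` sits at `2 * (k / 2) / 2 ^ (M + 1)`, at most one step from `k`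
    have h_parent : |f (x + k / 2 ^ (M + 1)) - f (x + (k / 2 : ℕ) / 2 ^ M)| ≤ a (M + 1) := by
      obtain ⟨j, hk_eq⟩ := Nat.even_or_odd' k
      have h_half : ((2 * j : ℕ) : ℝ) / 2 ^ (M + 1) = j / 2 ^ M := by
        push_cast; rw [pow_succ]; field_simp
      rcases hk_eq with rfl | rfl
      · rw [Nat.mul_div_cancel_left j two_pos, h_half, sub_self, abs_zero]
        exact ha (M + 1)
      · have h_odd := hf (M + 1) (2 * j) (by omega)
        rw [h_half] at h_odd
        rwa [show (2 * j + 1) / 2 = j by omega, Nat.cast_succ]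
    calc |f (x + k / 2 ^ (M + 1)) - f x|
        ≤ |f (x + k / 2 ^ (M + 1)) - f (x + (k / 2 : ℕ) / 2 ^ M)|
          + |f (x + (k / 2 : ℕ) / 2 ^ M) - f x| := abs_sub_le _ _ _
      _ ≤ a (M + 1) + ∑ m ∈ Finset.range (M + 1), a m := add_le_add h_parent (ih _ hj)
      _ = ∑ m ∈ Finset.range (M + 1 + 1), a m := by rw [Finset.sum_range_succ _ (M + 1), add_comm]

lemma abs_sub_le_tsum_of_dyadic_increments {f : ℝ → ℝ} (hf_cont : Continuous f) {x : ℝ}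
    {a : ℕ → ℝ} (ha : ∀ m, 0 ≤ a m) (ha_sum : Summable a)
    (hf : ∀ m k : ℕ, k < 2 ^ m → |f (x + (k + 1) / 2 ^ m) - f (x + k / 2 ^ m)| ≤ a m) :
    ∀ t ∈ Set.Icc x (x + 1), |f t - f x| ≤ ∑' m, a m := by
  intro t ⟨hxt, htx⟩
  set q : ℕ → ℕ := fun M ↦ ⌊(t - x) * 2 ^ M⌋₊
  have hq_le : ∀ M, q M ≤ 2 ^ M := fun M ↦
    Nat.floor_le_of_le (by push_cast; exact mul_le_of_le_one_left (by positivity) (by linarith))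
  have hq_lim : Tendsto (fun M ↦ x + (q M : ℝ) / 2 ^ M) atTop (𝓝 t) := by
    have := (tendsto_nat_floor_mul_div_atTop (sub_nonneg.mpr hxt)).comp
      (tendsto_pow_atTop_atTop_of_one_lt one_lt_two)
    simpa using this.const_add x
  refine le_of_tendsto (((hf_cont.tendsto t).comp hq_lim).sub_const (f x)).abs
    (Eventually.of_forall fun M ↦ ?_)
  exact (abs_sub_le_sum_of_dyadic_increments ha hf M (q M) (hq_le M)).trans
    (ha_sum.sum_le_tsum _ fun m _ ↦ ha m)

lemma tendsto_atTop_add_of_isLittleO {α : Type*} {l : Filter α} {f g h : α → ℝ}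
    (hg : Tendsto g l atTop) (hf : f =o[l] g) (hh : 0 < liminf (fun x ↦ h x / g x) l) :
    Tendsto (fun x ↦ f x + h x) l atTop := by
  have h_ne : {c | ∀ᶠ x in l, c ≤ h x / g x}.Nonempty := by
    by_contra h_empty
    rw [Set.not_nonempty_iff_eq_empty] at h_empty
    rw [liminf_eq, h_empty, Real.sSup_empty] at hh
    exact hh.false
  obtain ⟨a, ha_mem, ha⟩ := exists_lt_of_lt_csSup h_ne (by rwa [← liminf_eq])
  refine tendsto_atTop_mono' l ?_ (hg.const_mul_atTop (half_pos ha))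
  filter_upwards [ha_mem, hf.def (half_pos ha), hg.eventually_gt_atTop 0] with x hx hfx hgx
  rw [le_div_iff₀ hgx] at hx
  rw [norm_eq_abs, norm_eq_abs, abs_of_pos hgx] at hfx
  linarith [neg_abs_le (f x)]

lemma hasSubgaussianMGF_gaussianReal (v : ℝ≥0) :
    HasSubgaussianMGF (fun x ↦ x) v (gaussianReal 0 v) where
  integrable_exp_mul t := integrable_exp_mul_gaussianReal t
  mgf_le t := by simp [mgf_fun_id_gaussianReal]

lemma gaussianReal_real_abs_ge_le (v : ℝ≥0) {a : ℝ} (ha : 0 ≤ a) :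
    (gaussianReal 0 v).real {x | a ≤ |x|} ≤ 2 * exp (-a ^ 2 / (2 * v)) := by
  have h := hasSubgaussianMGF_gaussianReal v
  have h_right : (gaussianReal 0 v).real {x | a ≤ x} ≤ exp (-a ^ 2 / (2 * v)) :=
    h.measure_ge_le ha
  have h_left : (gaussianReal 0 v).real {x | a ≤ -x} ≤ exp (-a ^ 2 / (2 * v)) :=
    h.neg.measure_ge_le ha
  calc (gaussianReal 0 v).real {x | a ≤ |x|}
      ≤ (gaussianReal 0 v).real ({x | a ≤ x} ∪ {x | a ≤ -x}) :=
        measureReal_mono fun x (hx : a ≤ |x|) ↦ le_abs.mp hx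
    _ ≤ 2 * exp (-a ^ 2 / (2 * v)) := (measureReal_union_le _ _).trans (by linarith)

lemma gaussianReal_abs_ge_le_pow_four (v : ℝ≥0) {a : ℝ} (ha : 0 < a) :
    gaussianReal 0 v {x | a ≤ |x|} ≤ ENNReal.ofReal (16 * v ^ 2 / a ^ 4) := by
  rcases eq_or_ne v 0 with rfl | hv
  · simp [gaussianReal_zero_var, Measure.dirac_apply' _ (measurableSet_le measurable_const
      measurable_abs), ha.not_ge]
  rw [← ofReal_measureReal]
  refine ENNReal.ofReal_le_ofReal ((gaussianReal_real_abs_ge_le v ha.le).trans ?_)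
  have hy : 0 < a ^ 2 / (2 * v) := by positivity
  calc 2 * exp (-a ^ 2 / (2 * v)) = 2 / exp (a ^ 2 / (2 * v)) := by
        rw [neg_div, exp_neg, div_eq_mul_inv 2]
    _ ≤ 2 / ((a ^ 2 / (2 * v)) ^ 2 / 2) := by
        gcongr
        nlinarith [quadratic_le_exp_of_nonneg hy.le]
    _ = 16 * v ^ 2 / a ^ 4 := by field_simp; ring

lemma ae_eventually_notMem_of_le_ofReal {α : Type*} [MeasurableSpace α] {μ : Measure α}
    {s : ℕ → Set α} {b : ℕ → ℝ} (hb : Summable b) (hs : ∀ n, μ (s n) ≤ ENNReal.ofReal (b n)) :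
    ∀ᵐ x ∂μ, ∀ᶠ n in atTop, x ∉ s n :=
  ae_eventually_notMem <| ne_top_of_le_ne_top
    (ENNReal.tsum_coe_ne_top_iff_summable.mpr hb.toNNReal) (ENNReal.tsum_le_tsum hs)

lemma summable_one_div_nat_add_one_pow {p : ℕ} (hp : 1 < p) :
    Summable fun n : ℕ ↦ 1 / ((n : ℝ) + 1) ^ p := by
  exact_mod_cast (summable_nat_add_iff 1).mpr (Real.summable_one_div_nat_pow.mpr hp)

def HasGaussianIncrements {Ω : Type*} [MeasurableSpace Ω] (W : ℝ → Ω → ℝ) (P : Measure Ω) :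
    Prop :=
  ∀ s t : ℝ, 0 ≤ s → s ≤ t → P.map (fun ω ↦ W t ω - W s ω) = gaussianReal 0 (t - s).toNNReal

namespace HasGaussianIncrements

variable {Ω : Type*} [MeasurableSpace Ω] {P : Measure Ω} {W : ℝ → Ω → ℝ}

lemma measure_abs_sub_ge_le (hW : HasGaussianIncrements W P) (hW_meas : ∀ t, Measurable (W t))
    {s t a : ℝ} (hs : 0 ≤ s) (hst : s ≤ t) (ha : 0 < a) :
    P {ω | a ≤ |W t ω - W s ω|} ≤ ENNReal.ofReal (16 * (t - s) ^ 2 / a ^ 4) := by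
  have h_set : MeasurableSet {x : ℝ | a ≤ |x|} := measurableSet_le measurable_const measurable_abs
  have h_law := gaussianReal_abs_ge_le_pow_four (t - s).toNNReal ha
  rwa [← hW s t hs hst, Measure.map_apply (by fun_prop) h_set,
    Real.coe_toNNReal _ (sub_nonneg.mpr hst)] at h_law

lemma ae_eventually_abs_sub_zero_lt (hW : HasGaussianIncrements W P)
    (hW_meas : ∀ t, Measurable (W t)) {δ : ℝ} (hδ : 0 < δ) :
    ∀ᵐ ω ∂P, ∀ᶠ n : ℕ in atTop, |W n ω - W 0 ω| < δ * (n + 1) := by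
  have h_tail (n : ℕ) : P {ω | δ * (n + 1) ≤ |W n ω - W 0 ω|} ≤
      ENNReal.ofReal (16 / δ ^ 4 * (1 / ((n : ℝ) + 1) ^ 2)) := by
    refine (hW.measure_abs_sub_ge_le hW_meas le_rfl n.cast_nonneg (by positivity)).trans
      (ENNReal.ofReal_le_ofReal ?_)
    calc 16 * ((n : ℝ) - 0) ^ 2 / (δ * (n + 1)) ^ 4 ≤ 16 * ((n : ℝ) + 1) ^ 2 / (δ * (n + 1)) ^ 4 := by
          gcongr <;> linarith
      _ = 16 / δ ^ 4 * (1 / ((n : ℝ) + 1) ^ 2) := by field_simp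
  filter_upwards [ae_eventually_notMem_of_le_ofReal
    ((summable_one_div_nat_add_one_pow one_lt_two).mul_left _) h_tail] with ω hω
  exact hω.mono fun n hn ↦ not_le.mp hn

lemma ae_eventually_dyadic_increments_lt (hW : HasGaussianIncrements W P)
    (hW_meas : ∀ t, Measurable (W t)) {δ : ℝ} (hδ : 0 < δ) :
    ∀ᵐ ω ∂P, ∀ᶠ n : ℕ in atTop, ∀ m k : ℕ, k < 2 ^ m →
      |W (n + (k + 1) / 2 ^ m) ω - W (n + k / 2 ^ m) ω| < δ * (n + 1) * (7 / 8) ^ m := by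
  set bad : ℕ → ℕ → ℕ → Set Ω := fun n m k ↦
    {ω | δ * (n + 1) * (7 / 8) ^ m ≤ |W (n + (k + 1) / 2 ^ m) ω - W (n + k / 2 ^ m) ω|}
  set r : ℝ := 2048 / 2401
  -- with thresholds `(7 / 8) ^ m` the `2 ^ m` increments of variance `2⁻ᵐ` at level `m`
  -- contribute a geometric factor `2 ^ m * 4⁻ᵐ * (8 / 7) ^ (4 * m) = r ^ m`
  have h_level (n m : ℕ) : P (⋃ k ∈ Finset.range (2 ^ m), bad n m k) ≤
      ENNReal.ofReal (16 / (δ * (n + 1)) ^ 4 * r ^ m) := by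
    have h_step (k : ℕ) : P (bad n m k) ≤
        ENNReal.ofReal (16 * (1 / 2 ^ m) ^ 2 / (δ * (n + 1) * (7 / 8) ^ m) ^ 4) := by
      have h := hW.measure_abs_sub_ge_le hW_meas (s := n + k / 2 ^ m) (t := n + (k + 1) / 2 ^ m)
        (a := δ * (n + 1) * (7 / 8) ^ m) (by positivity) (by gcongr; linarith) (by positivity)
      rwa [show (n + ((k : ℝ) + 1) / 2 ^ m) - (n + k / 2 ^ m) = 1 / 2 ^ m by ring] at h
    have h_r : r ^ m = 1 / (2 ^ m * ((7 / 8) ^ m) ^ 4) := by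
      rw [eq_div_iff (by positivity), ← pow_mul, mul_comm m 4, pow_mul, ← mul_pow, ← mul_pow]
      norm_num [r]
    calc P (⋃ k ∈ Finset.range (2 ^ m), bad n m k)
        ≤ ∑ k ∈ Finset.range (2 ^ m), P (bad n m k) := measure_biUnion_finset_le _ _
      _ ≤ ∑ k ∈ Finset.range (2 ^ m),
            ENNReal.ofReal (16 * (1 / 2 ^ m) ^ 2 / (δ * (n + 1) * (7 / 8) ^ m) ^ 4) :=
          Finset.sum_le_sum fun k _ ↦ h_step k
      _ = ENNReal.ofReal (2 ^ m * (16 * (1 / 2 ^ m) ^ 2 / (δ * (n + 1) * (7 / 8) ^ m) ^ 4)) := by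
          rw [Finset.sum_const, Finset.card_range, nsmul_eq_mul, ENNReal.ofReal_mul (by positivity),
            ENNReal.ofReal_pow zero_le_two, ENNReal.ofReal_ofNat, Nat.cast_pow, Nat.cast_ofNat]
      _ = ENNReal.ofReal (16 / (δ * (n + 1)) ^ 4 * r ^ m) := by
          rw [h_r]
          field_simp
  have h_total (n : ℕ) : P (⋃ m, ⋃ k ∈ Finset.range (2 ^ m), bad n m k) ≤
      ENNReal.ofReal (16 / δ ^ 4 * (1 - r)⁻¹ * (1 / ((n : ℝ) + 1) ^ 4)) := by
    have h_geom : Summable fun m : ℕ ↦ r ^ m :=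
      summable_geometric_of_lt_one (by norm_num [r]) (by norm_num [r])
    calc P (⋃ m, ⋃ k ∈ Finset.range (2 ^ m), bad n m k)
        ≤ ∑' m, P (⋃ k ∈ Finset.range (2 ^ m), bad n m k) := measure_iUnion_le _
      _ ≤ ∑' m, ENNReal.ofReal (16 / (δ * (n + 1)) ^ 4 * r ^ m) := ENNReal.tsum_le_tsum (h_level n)
      _ = ENNReal.ofReal (16 / (δ * (n + 1)) ^ 4 * (1 - r)⁻¹) := by
          rw [← ENNReal.ofReal_tsum_of_nonneg (fun m ↦ by positivity) (h_geom.mul_left _),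
            tsum_mul_left, tsum_geometric_of_lt_one (by norm_num [r]) (by norm_num [r])]
      _ = ENNReal.ofReal (16 / δ ^ 4 * (1 - r)⁻¹ * (1 / ((n : ℝ) + 1) ^ 4)) := by
          congr 1
          field_simp
  filter_upwards [ae_eventually_notMem_of_le_ofReal
    ((summable_one_div_nat_add_one_pow (by norm_num : 1 < 4)).mul_left _) h_total] with ω hω
  refine hω.mono fun n hn m k hk ↦ not_le.mp fun h ↦ hn ?_
  exact Set.mem_iUnion.mpr ⟨m, Set.mem_biUnion (Finset.mem_range.mpr hk) h⟩

lemma ae_eventually_abs_sub_le (hW : HasGaussianIncrements W P) (hW_meas : ∀ t, Measurable (W t))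
    (hW_cont : ∀ᵐ ω ∂P, Continuous fun t ↦ W t ω) {δ : ℝ} (hδ : 0 < δ) :
    ∀ᵐ ω ∂P, ∀ᶠ n : ℕ in atTop, ∀ t ∈ Set.Icc (n : ℝ) (n + 1), |W t ω - W 0 ω| ≤ δ * (n + 1) := by
  filter_upwards [hW.ae_eventually_abs_sub_zero_lt hW_meas (half_pos hδ),
    hW.ae_eventually_dyadic_increments_lt hW_meas (by positivity : 0 < δ / 16), hW_cont]
    with ω h_int h_dyadic h_cont
  filter_upwards [h_int, h_dyadic] with n hn hn_dyadic t ht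
  have h_geom : Summable fun m : ℕ ↦ (7 / 8 : ℝ) ^ m :=
    summable_geometric_of_lt_one (by norm_num) (by norm_num)
  have h_osc := abs_sub_le_tsum_of_dyadic_increments h_cont (fun m ↦ by positivity)
    (h_geom.mul_left _) (fun m k hk ↦ (hn_dyadic m k hk).le) t ht
  rw [tsum_mul_left, tsum_geometric_of_lt_one (by norm_num) (by norm_num)] at h_osc
  calc |W t ω - W 0 ω| ≤ |W t ω - W n ω| + |W n ω - W 0 ω| := abs_sub_le _ _ _
    _ ≤ δ * (n + 1) := by norm_num at h_osc; linarith

lemma ae_isLittleO_id (hW : HasGaussianIncrements W P) (hW_meas : ∀ t, Measurable (W t))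
    (hW_cont : ∀ᵐ ω ∂P, Continuous fun t ↦ W t ω) :
    ∀ᵐ ω ∂P, (fun t ↦ W t ω) =o[atTop] id := by
  have h (j : ℕ) : ∀ᵐ ω ∂P, ∀ᶠ t in atTop, j * ‖W t ω - W 0 ω‖ ≤ ‖id t‖ := by
    filter_upwards [hW.ae_eventually_abs_sub_le hW_meas hW_cont (δ := 1 / (2 * (j + 1)))
      (by positivity)] with ω hω
    filter_upwards [tendsto_nat_floor_atTop.eventually hω, eventually_ge_atTop 1] with t ht ht1
    have h_floor : (⌊t⌋₊ : ℝ) ≤ t := Nat.floor_le (by linarith)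
    have h_bound := ht t ⟨h_floor, (Nat.lt_floor_add_one t).le⟩
    rw [id, norm_eq_abs, norm_eq_abs, abs_of_pos (a := t) (by linarith)]
    calc j * |W t ω - W 0 ω| ≤ j * (1 / (2 * (j + 1)) * (⌊t⌋₊ + 1)) := by gcongr
      _ = j / (j + 1) * ((⌊t⌋₊ + 1) / 2) := by field_simp
      _ ≤ 1 * ((t + 1) / 2) := by
          gcongr
          exact (div_le_one (by positivity)).mpr (by linarith)
      _ ≤ t := by linarith
  filter_upwards [ae_all_iff.mpr h] with ω hω
  simpa using (isLittleO_iff_nat_mul_le.mpr hω).add (isLittleO_const_id_atTop (W 0 ω))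

end HasGaussianIncrements

theorem brownian_plus_dominating_drift_tendsto_atTop_general
    {Ω : Type*} [MeasureSpace Ω]
    (W : ℝ → Ω → ℝ)
    (hW_meas : ∀ t : ℝ, Measurable (W t))
    (hW_cont : ∀ᵐ ω ∂(ℙ : Measure Ω), Continuous fun t => W t ω)
    (hW_gauss : ∀ s t : ℝ, 0 ≤ s → s ≤ t →
      Measure.map (fun ω => W t ω - W s ω) ℙ = gaussianReal 0 (t - s).toNNReal)
    (τ : ℝ → Ω → ℝ) (A : ℝ → Ω → ℝ)
    (h_liminf : ∀ᵐ ω ∂(ℙ : Measure Ω),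
      Tendsto (fun s => τ s ω) atTop atTop →
        0 < liminf (fun s => A s ω / τ s ω) atTop) :
    ∀ᵐ ω ∂(ℙ : Measure Ω),
      Tendsto (fun s => τ s ω) atTop atTop →
        Tendsto (fun s => W (τ s ω) ω + A s ω) atTop atTop := by
  have hW : HasGaussianIncrements W ℙ := hW_gauss
  filter_upwards [hW.ae_isLittleO_id hW_meas hW_cont, h_liminf] with ω hW_growth hA hτ
  exact tendsto_atTop_add_of_isLittleO hτ (hW_growth.comp_tendsto hτ) (hA hτ)

/-- Dambis–Dubins–Schwarz time-changed form of the lemma: if `W` is a standard real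
Brownian motion, `τ` is an a.s. nondecreasing continuous nonnegative time change, and
`A` is a real process with `liminf A_s / τ_s > 0` a.s. on `{τ_s → ∞}`, then
`W (τ_s) + A_s → +∞` a.s. on `{τ_s → ∞}`. -/
theorem brownian_plus_dominating_drift_tendsto_atTop
    {Ω : Type*} [MeasureSpace Ω] [IsProbabilityMeasure (ℙ : Measure Ω)]
    (W : ℝ → Ω → ℝ)
    (hW_meas : ∀ t : ℝ, Measurable (W t))
    (hW_zero : ∀ᵐ ω ∂(ℙ : Measure Ω), W 0 ω = 0)
    (hW_cont : ∀ᵐ ω ∂(ℙ : Measure Ω), Continuous fun t => W t ω)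
    (hW_gauss : ∀ s t : ℝ, 0 ≤ s → s ≤ t →
      Measure.map (fun ω => W t ω - W s ω) ℙ = gaussianReal 0 (t - s).toNNReal)
    (hW_indep : ∀ (n : ℕ) (t : ℕ → ℝ), (∀ i, 0 ≤ t i) → Monotone t →
      iIndepFun (m := fun _ : Fin n => (inferInstance : MeasurableSpace ℝ))
        (fun i : Fin n => fun ω => W (t (i + 1)) ω - W (t i) ω) ℙ)
    (τ : ℝ → Ω → ℝ) (A : ℝ → Ω → ℝ)
    (hτ_nonneg : ∀ s ω, 0 ≤ τ s ω)
    (hτ_path : ∀ᵐ ω ∂(ℙ : Measure Ω),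
      Monotone (fun s => τ s ω) ∧ Continuous (fun s => τ s ω))
    (h_liminf : ∀ᵐ ω ∂(ℙ : Measure Ω),
      Tendsto (fun s => τ s ω) atTop atTop →
        0 < liminf (fun s => A s ω / τ s ω) atTop) :
    ∀ᵐ ω ∂(ℙ : Measure Ω),
      Tendsto (fun s => τ s ω) atTop atTop →
        Tendsto (fun s => W (τ s ω) ω + A s ω) atTop atTop :=
  brownian_plus_dominating_drift_tendsto_atTop_general W hW_meas hW_cont hW_gauss τ A h_liminf
end

section
/- The Ricci tensor of the Schwarzschild metric vanishes identically: for the Christoffel symbols Γ^k_{ij} of the Schwarzschild metric g on Ω_sph, one has Ric_{ij}(p) = 0 for all indices i,j ∈ {t,r,φ,ψ} and all points p ∈ Ω_sph. -/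
noncomputable section

/-- Partial derivative of `f` in the `i`-th coordinate direction at `p`. -/
def coordPDeriv {n : ℕ} (f : (Fin n → ℝ) → ℝ) (i : Fin n) (p : Fin n → ℝ) : ℝ :=
  fderiv ℝ f p (Pi.single i 1)

/-- Christoffel symbols `Γ^k_{ij}` of a metric `g` given in coordinates on (an open
subset of) `ℝⁿ`: `Γ^k_{ij} = (1/2) Σ_l g^{kl} (∂_i g_{jl} + ∂_j g_{il} − ∂_l g_{ij})`. -/
def christoffel {n : ℕ} (g : (Fin n → ℝ) → Matrix (Fin n) (Fin n) ℝ)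
    (k i j : Fin n) (p : Fin n → ℝ) : ℝ :=
  (1 / 2) * ∑ l, (g p)⁻¹ k l *
    (coordPDeriv (fun q => g q j l) i p + coordPDeriv (fun q => g q i l) j p
      - coordPDeriv (fun q => g q i j) l p)

/-- The Schwarzschild metric in spherical coordinates `(t, r, φ, ψ)`. -/
def schwMetric (R : ℝ) (p : Fin 4 → ℝ) : Matrix (Fin 4) (Fin 4) ℝ :=
  Matrix.diagonal
    ![1 - R / p 1, -(1 - R / p 1)⁻¹, -(p 1) ^ 2, -(p 1) ^ 2 * Real.sin (p 2) ^ 2]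

/-- The coordinate chart `Ω_sph = {(t,r,φ,ψ) : r > R, 0 < φ < π}`. -/
def sphDomain (R : ℝ) : Set (Fin 4 → ℝ) :=
  {p | R < p 1 ∧ 0 < p 2 ∧ p 2 < Real.pi}

/-- The Ricci tensor in coordinates:
`Ric_{ij} = Σ_k ∂_k Γ^k_{ij} − Σ_k ∂_j Γ^k_{ik} + Σ_{k,l} (Γ^k_{kl} Γ^l_{ij} − Γ^k_{jl} Γ^l_{ik})`. -/
def ricci {n : ℕ} (g : (Fin n → ℝ) → Matrix (Fin n) (Fin n) ℝ)
    (i j : Fin n) (p : Fin n → ℝ) : ℝ :=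
  (∑ k, coordPDeriv (fun q => christoffel g k i j q) k p)
    - (∑ k, coordPDeriv (fun q => christoffel g k i k q) j p)
    + ∑ k, ∑ l, (christoffel g k k l p * christoffel g l i j p
        - christoffel g k j l p * christoffel g l i k p)

/-
The Schwarzschild metric is the static spherically symmetric metric
`diag(f(r), -1/f(r), -r², -r² sin²φ)` with `f(r) = 1 - R/r`. For such a metric every Christoffel
symbol is a function of `r` times a function of `φ`, and the Ricci tensor comes out diagonal,
`Ric = diag((f/2) E, -E/(2f), F, F sin²φ)` with `E = f'' + 2f'/r = (r² f')'/r²` and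
`F = 1 - (r f)'`. For `f = 1 - R/r` one has `r² f' = R` and `r f = r - R`, so `E = F = 0`.
-/

open Matrix Filter Topology Real

section coordPDeriv

variable {n : ℕ}

theorem HasFDerivAt.coordPDeriv_eq {f : (Fin n → ℝ) → ℝ} {L : (Fin n → ℝ) →L[ℝ] ℝ}
    {p : Fin n → ℝ} (h : HasFDerivAt f L p) (i : Fin n) :
    coordPDeriv f i p = L (Pi.single i 1) := by
  rw [coordPDeriv, h.fderiv]

theorem Filter.EventuallyEq.coordPDeriv_eq {f g : (Fin n → ℝ) → ℝ} {p : Fin n → ℝ}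
    (h : f =ᶠ[𝓝 p] g) (i : Fin n) : coordPDeriv f i p = coordPDeriv g i p := by
  rw [coordPDeriv, coordPDeriv, h.fderiv_eq]

theorem coordPDeriv_const (c : ℝ) (i : Fin n) (p : Fin n → ℝ) :
    coordPDeriv (fun _ => c) i p = 0 := by
  simp [coordPDeriv]

theorem hasFDerivAt_comp_apply {F : ℝ → ℝ} {F' : ℝ} {p : Fin n → ℝ} {m : Fin n}
    (hF : HasDerivAt F F' (p m)) :
    HasFDerivAt (fun q => F (q m))
      (F' • ContinuousLinearMap.proj (R := ℝ) (φ := fun _ : Fin n => ℝ) m) p :=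
  hF.comp_hasFDerivAt p (ContinuousLinearMap.proj m : (Fin n → ℝ) →L[ℝ] ℝ).hasFDerivAt

theorem coordPDeriv_comp_apply {F : ℝ → ℝ} {F' : ℝ} {p : Fin n → ℝ} {m : Fin n}
    (hF : HasDerivAt F F' (p m)) (i : Fin n) :
    coordPDeriv (fun q => F (q m)) i p = if i = m then F' else 0 := by
  rw [(hasFDerivAt_comp_apply hF).coordPDeriv_eq]
  by_cases h : i = m <;> simp [h]

theorem coordPDeriv_mul_comp_apply {F G : ℝ → ℝ} {F' G' : ℝ} {p : Fin n → ℝ}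
    {m m' : Fin n} (hF : HasDerivAt F F' (p m)) (hG : HasDerivAt G G' (p m')) (i : Fin n) :
    coordPDeriv (fun q => F (q m) * G (q m')) i p =
      (if i = m then F' * G (p m') else 0) + (if i = m' then F (p m) * G' else 0) := by
  have h : HasFDerivAt (fun q => F (q m) * G (q m')) _ p :=
    (hasFDerivAt_comp_apply hF).mul (hasFDerivAt_comp_apply hG)
  rw [h.coordPDeriv_eq]
  simp only [_root_.add_apply, _root_.smul_apply, ContinuousLinearMap.proj_apply,
    Pi.single_apply, smul_eq_mul]
  split_ifs <;> subst_vars <;> first | contradiction | ring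

end coordPDeriv

theorem christoffel_diagonal {n : ℕ} {d : (Fin n → ℝ) → Fin n → ℝ} {p : Fin n → ℝ}
    (hd : ∀ k, d p k ≠ 0) (k i j : Fin n) :
    christoffel (fun q => diagonal (d q)) k i j p =
      (2 * d p k)⁻¹ * ((if j = k then coordPDeriv (fun q => d q k) i p else 0)
        + (if i = k then coordPDeriv (fun q => d q k) j p else 0)
        - (if i = j then coordPDeriv (fun q => d q i) k p else 0)) := by
  have hderiv : ∀ a b m, coordPDeriv (fun q => diagonal (d q) a b) m p =
      if a = b then coordPDeriv (fun q => d q a) m p else 0 := by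
    intro a b m
    by_cases hab : a = b
    · subst hab; simp
    · simp [hab, coordPDeriv_const]
  have hinv : (diagonal (d p))⁻¹ = diagonal (d p)⁻¹ := by
    refine inv_eq_left_inv ?_
    rw [diagonal_mul_diagonal, ← diagonal_one]
    exact congrArg diagonal (funext fun k => inv_mul_cancel₀ (hd k))
  simp only [christoffel, hderiv]
  simp only [hinv, diagonal_apply, Pi.inv_apply, ite_mul, zero_mul, Finset.sum_ite_eq,
    Finset.mem_univ, if_true]
  split_ifs <;> subst_vars <;> ring

theorem hasDerivAt_sin_sq (φ : ℝ) : HasDerivAt (fun φ => sin φ ^ 2) (2 * sin φ * cos φ) φ :=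
  ((hasDerivAt_pow 2 _).comp _ (hasDerivAt_sin φ)).congr_deriv (by ring)

def staticSphericalMetric (f : ℝ → ℝ) (p : Fin 4 → ℝ) : Matrix (Fin 4) (Fin 4) ℝ :=
  diagonal ![f (p 1), -(f (p 1))⁻¹, -(p 1) ^ 2, -(p 1) ^ 2 * sin (p 2) ^ 2]

theorem schwMetric_eq_staticSphericalMetric (R : ℝ) :
    schwMetric R = staticSphericalMetric (fun r => 1 - R / r) := rfl

/-- Together with `sphAngular`: the Christoffel symbol `Γ^k_{ij}` of `staticSphericalMetric f`
at `(t, r, φ, ψ)` is `sphRadial f f' k i j r * sphAngular k i j φ` (matrix `k` holds `Γ^k`).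
Where the radial factor vanishes the angular one is an arbitrary `1`. -/
def sphRadial (f f' : ℝ → ℝ) : Fin 4 → Matrix (Fin 4) (Fin 4) (ℝ → ℝ) :=
  ![!![0, f' / (2 * f), 0, 0; f' / (2 * f), 0, 0, 0; 0, 0, 0, 0; 0, 0, 0, 0],
    !![f * f' / 2, 0, 0, 0; 0, -(f' / (2 * f)), 0, 0; 0, 0, -(id * f), 0; 0, 0, 0, -(id * f)],
    !![0, 0, 0, 0; 0, 0, id⁻¹, 0; 0, id⁻¹, 0, 0; 0, 0, 0, 1],
    !![0, 0, 0, 0; 0, 0, 0, id⁻¹; 0, 0, 0, 1; 0, id⁻¹, 1, 0]]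

def sphAngular : Fin 4 → Matrix (Fin 4) (Fin 4) (ℝ → ℝ) :=
  ![Matrix.of fun _ _ => 1,
    !![1, 1, 1, 1; 1, 1, 1, 1; 1, 1, 1, 1; 1, 1, 1, sin ^ 2],
    !![1, 1, 1, 1; 1, 1, 1, 1; 1, 1, 1, 1; 1, 1, 1, -(sin * cos)],
    !![1, 1, 1, 1; 1, 1, 1, 1; 1, 1, 1, cos / sin; 1, 1, cos / sin, 1]]

def sphRadialDeriv (f f' f'' : ℝ → ℝ) : Fin 4 → Matrix (Fin 4) (Fin 4) (ℝ → ℝ) :=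
  let dlog := (f'' * f - f' ^ 2) / (2 * f ^ 2)
  ![!![0, dlog, 0, 0; dlog, 0, 0, 0; 0, 0, 0, 0; 0, 0, 0, 0],
    !![(f' ^ 2 + f * f'') / 2, 0, 0, 0; 0, -dlog, 0, 0; 0, 0, -(f + id * f'), 0;
      0, 0, 0, -(f + id * f')],
    !![0, 0, 0, 0; 0, 0, -(id ^ 2)⁻¹, 0; 0, -(id ^ 2)⁻¹, 0, 0; 0, 0, 0, 0],
    !![0, 0, 0, 0; 0, 0, 0, -(id ^ 2)⁻¹; 0, 0, 0, 0; 0, -(id ^ 2)⁻¹, 0, 0]]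

def sphAngularDeriv : Fin 4 → Matrix (Fin 4) (Fin 4) (ℝ → ℝ) :=
  ![0,
    !![0, 0, 0, 0; 0, 0, 0, 0; 0, 0, 0, 0; 0, 0, 0, 2 * sin * cos],
    !![0, 0, 0, 0; 0, 0, 0, 0; 0, 0, 0, 0; 0, 0, 0, sin ^ 2 - cos ^ 2],
    !![0, 0, 0, 0; 0, 0, 0, 0; 0, 0, 0, -(sin ^ 2)⁻¹; 0, 0, -(sin ^ 2)⁻¹, 0]]

section staticSpherical

variable {f f' f'' : ℝ → ℝ} {p : Fin 4 → ℝ}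

theorem christoffel_staticSphericalMetric (hf : HasDerivAt f (f' (p 1)) (p 1))
    (hf0 : f (p 1) ≠ 0) (hr : p 1 ≠ 0) (hφ : sin (p 2) ≠ 0) (k i j : Fin 4) :
    christoffel (staticSphericalMetric f) k i j p =
      sphRadial f f' k i j (p 1) * sphAngular k i j (p 2) := by
  have hd : ∀ k, ![f (p 1), -(f (p 1))⁻¹, -(p 1) ^ 2, -(p 1) ^ 2 * sin (p 2) ^ 2] k ≠ 0 := by
    intro k; fin_cases k <;> simp [hf0, hr, hφ]
  have h0 : ∀ m, coordPDeriv (fun q => f (q 1)) m p = if m = 1 then f' (p 1) else 0 :=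
    coordPDeriv_comp_apply hf
  have h1 : ∀ m, coordPDeriv (fun q => -(f (q 1))⁻¹) m p =
      if m = 1 then -(-f' (p 1) / f (p 1) ^ 2) else 0 :=
    coordPDeriv_comp_apply (F := fun r => -(f r)⁻¹) (hf.inv hf0).neg
  have h2 : ∀ m, coordPDeriv (fun q => -q 1 ^ 2) m p = if m = 1 then -(2 * p 1) else 0 := by
    simpa using coordPDeriv_comp_apply (F := fun r => -r ^ 2) (hasDerivAt_pow 2 (p 1)).neg
  have h3 : ∀ m, coordPDeriv (fun q => -(q 1 ^ 2 * sin (q 2) ^ 2)) m p =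
      (if m = 1 then -(2 * p 1) * sin (p 2) ^ 2 else 0)
        + (if m = 2 then -p 1 ^ 2 * (2 * sin (p 2) * cos (p 2)) else 0) := by
    simpa using coordPDeriv_mul_comp_apply (F := fun r => -r ^ 2)
      (hasDerivAt_pow 2 (p 1)).neg (hasDerivAt_sin_sq (p 2))
  unfold staticSphericalMetric
  rw [christoffel_diagonal hd]
  fin_cases k <;> fin_cases i <;> fin_cases j <;>
    simp [h0, h1, h2, h3, sphRadial, sphAngular] <;> field_simp

theorem hasDerivAt_sphRadial {r : ℝ} (hf : HasDerivAt f (f' r) r)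
    (hf' : HasDerivAt f' (f'' r) r) (hf0 : f r ≠ 0) (hr : r ≠ 0) (k i j : Fin 4) :
    HasDerivAt (sphRadial f f' k i j) (sphRadialDeriv f f' f'' k i j r) r := by
  have hlog : HasDerivAt (fun r => f' r / (2 * f r))
      ((f'' r * f r - f' r ^ 2) / (2 * f r ^ 2)) r := by
    refine (hf'.fun_div (hf.const_mul 2) (by positivity)).congr_deriv ?_
    field_simp
  have hprod : HasDerivAt (fun r => f r * f' r / 2) ((f' r ^ 2 + f r * f'' r) / 2) r := by
    refine ((hf.fun_mul hf').div_const 2).congr_deriv ?_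
    ring
  have hlin : HasDerivAt (fun r => -(r * f r)) (-(f r + r * f' r)) r := by
    refine ((hasDerivAt_id r).fun_mul hf).fun_neg.congr_deriv ?_
    simp
  fin_cases k <;> fin_cases i <;> fin_cases j
  all_goals first
    | exact hlog | exact hlog.neg | exact hprod | exact hlin | exact hasDerivAt_inv hr
    | exact hasDerivAt_const r _

theorem hasDerivAt_sphAngular {φ : ℝ} (hφ : sin φ ≠ 0) (k i j : Fin 4) :
    HasDerivAt (sphAngular k i j) (sphAngularDeriv k i j φ) φ := by
  have hsc : HasDerivAt (fun φ => -(sin φ * cos φ)) (sin φ ^ 2 - cos φ ^ 2) φ := by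
    refine ((hasDerivAt_sin φ).fun_mul (hasDerivAt_cos φ)).fun_neg.congr_deriv ?_
    ring
  have hcot : HasDerivAt (fun φ => cos φ / sin φ) (-(sin φ ^ 2)⁻¹) φ := by
    refine ((hasDerivAt_cos φ).fun_div (hasDerivAt_sin φ) hφ).congr_deriv ?_
    field_simp
    linear_combination -sin_sq_add_cos_sq φ
  fin_cases k <;> fin_cases i <;> fin_cases j
  all_goals first | exact hasDerivAt_sin_sq φ | exact hsc | exact hcot | exact hasDerivAt_const φ _

theorem coordPDeriv_christoffel_staticSphericalMetric
    (hf : ∀ᶠ r in 𝓝 (p 1), HasDerivAt f (f' r) r) (hf' : HasDerivAt f' (f'' (p 1)) (p 1))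
    (hf0 : f (p 1) ≠ 0) (hr : p 1 ≠ 0) (hφ : sin (p 2) ≠ 0) (k i j m : Fin 4) :
    coordPDeriv (fun q => christoffel (staticSphericalMetric f) k i j q) m p =
      (if m = 1 then sphRadialDeriv f f' f'' k i j (p 1) * sphAngular k i j (p 2) else 0) +
        (if m = 2 then sphRadial f f' k i j (p 1) * sphAngularDeriv k i j (p 2) else 0) := by
  have hradial : ∀ᶠ r in 𝓝 (p 1), HasDerivAt f (f' r) r ∧ f r ≠ 0 ∧ r ≠ 0 :=
    hf.and ((hf.self_of_nhds.continuousAt.eventually_ne hf0).and (eventually_ne_nhds hr))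
  have hnear : ∀ᶠ q in 𝓝 p,
      (HasDerivAt f (f' (q 1)) (q 1) ∧ f (q 1) ≠ 0 ∧ q 1 ≠ 0) ∧ sin (q 2) ≠ 0 :=
    (((continuous_apply 1).tendsto p).eventually hradial).and
      (((continuous_sin.comp (continuous_apply 2)).tendsto p).eventually_ne hφ)
  have hΓ : (fun q => christoffel (staticSphericalMetric f) k i j q) =ᶠ[𝓝 p]
      fun q => sphRadial f f' k i j (q 1) * sphAngular k i j (q 2) :=
    hnear.mono fun q ⟨⟨hfq, hf0q, hrq⟩, hφq⟩ =>
      christoffel_staticSphericalMetric hfq hf0q hrq hφq k i j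
  rw [hΓ.coordPDeriv_eq, coordPDeriv_mul_comp_apply
    (hasDerivAt_sphRadial hf.self_of_nhds hf' hf0 hr k i j) (hasDerivAt_sphAngular hφ k i j)]

theorem ricci_staticSphericalMetric (hf : ∀ᶠ r in 𝓝 (p 1), HasDerivAt f (f' r) r)
    (hf' : HasDerivAt f' (f'' (p 1)) (p 1)) (hf0 : f (p 1) ≠ 0) (hr : p 1 ≠ 0)
    (hφ : sin (p 2) ≠ 0) (i j : Fin 4) :
    ricci (staticSphericalMetric f) i j p =
      diagonal ![f (p 1) / 2 * (f'' (p 1) + 2 * f' (p 1) / p 1),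
        -(f'' (p 1) + 2 * f' (p 1) / p 1) / (2 * f (p 1)),
        1 - f (p 1) - p 1 * f' (p 1),
        (1 - f (p 1) - p 1 * f' (p 1)) * sin (p 2) ^ 2] i j := by
  unfold ricci
  simp only [coordPDeriv_christoffel_staticSphericalMetric hf hf' hf0 hr hφ,
    christoffel_staticSphericalMetric hf.self_of_nhds hf0 hr hφ, Fin.sum_univ_four]
  fin_cases i <;> fin_cases j <;>
    simp [sphRadial, sphAngular, sphRadialDeriv, sphAngularDeriv] <;>
    field_simp
  all_goals grind [sin_sq_add_cos_sq]

theorem ricci_staticSphericalMetric_eq_zero (hf : ∀ᶠ r in 𝓝 (p 1), HasDerivAt f (f' r) r)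
    (hf' : HasDerivAt f' (f'' (p 1)) (p 1)) (hf0 : f (p 1) ≠ 0) (hr : p 1 ≠ 0)
    (hφ : sin (p 2) ≠ 0) (hE : p 1 * f'' (p 1) + 2 * f' (p 1) = 0)
    (hF : f (p 1) + p 1 * f' (p 1) = 1) (i j : Fin 4) :
    ricci (staticSphericalMetric f) i j p = 0 := by
  have hE' : f'' (p 1) + 2 * f' (p 1) / p 1 = 0 := by
    field_simp
    linear_combination hE
  rw [ricci_staticSphericalMetric hf hf' hf0 hr hφ, hE', ← hF]
  simp [← Matrix.zero_empty]

end staticSpherical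

/-- The Ricci tensor of the Schwarzschild metric vanishes identically on `Ω_sph`. -/
theorem schwarzschild_ricci_flat (R : ℝ) (hR : 0 < R) :
    ∀ p ∈ sphDomain R, ∀ i j : Fin 4, ricci (schwMetric R) i j p = 0 := by
  rintro p ⟨hRr, hφ₀, hφπ⟩ i j
  have hr : 0 < p 1 := hR.trans hRr
  have hf : ∀ᶠ r in 𝓝 (p 1), HasDerivAt (fun r => 1 - R / r) (R / r ^ 2) r :=
    (eventually_ne_nhds hr.ne').mono fun r hr =>
      ((hasDerivAt_const r R).fun_div (hasDerivAt_id' r) hr).const_sub 1 |>.congr_deriv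
        (by field_simp; ring)
  have hf' : HasDerivAt (fun r => R / r ^ 2) (-2 * R / p 1 ^ 3) (p 1) :=
    ((hasDerivAt_const _ R).fun_div (hasDerivAt_pow 2 _) (by positivity)).congr_deriv
      (by field_simp; ring)
  have hf0 : 1 - R / p 1 ≠ 0 := sub_ne_zero.mpr ((div_lt_one hr).mpr hRr).ne'
  rw [schwMetric_eq_staticSphericalMetric]
  refine ricci_staticSphericalMetric_eq_zero (f'' := fun r => -2 * R / r ^ 3) hf hf' hf0 hr.ne'
    (sin_pos_of_pos_of_lt_pi hφ₀ hφπ).ne' ?_ ?_ i j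
  · field_simp
    ring
  · field_simp
    ring

end
end

section
/- Let ξ(s) = (t(s), r(s), φ(s), ψ(s)) be a C² curve with values in Ω_sph, defined on an interval I, satisfying the geodesic equations of the Schwarzschild metric. Then the pseudo-norm q(s) := (1 − R/r(s))·ṫ(s)² − (1 − R/r(s))⁻¹·ṙ(s)² − r(s)²·(φ̇(s)² + sin²φ(s)·ψ̇(s)²) is constant on I. Moreover, if q ≡ 1 (unit timelike geodesic), then for all s ∈ I one has ṙ(s)² = a² − (1 − R/r(s))·(1 + b²/r(s)²), where a = (1 − R/r(s))·ṫ(s) and b = r(s)²·√(φ̇(s)² + sin²φ(s)·ψ̇(s)²) are the (constant) values of the two first integrals of the motion. -/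
/-!
The pseudo-norm `g(ξ̇, ξ̇)` is conserved along a geodesic of any metric. Its derivative is
`∂_k g_ij ξ̇^k ξ̇^i ξ̇^j + 2 g_mk ξ̇^m ξ̈^k`; inserting the geodesic equation and lowering the
index of the Christoffel symbols, `g_mk Γ^k_ij = (∂_i g_jm + ∂_j g_im − ∂_m g_ij) / 2`, turns
the second term into minus the first, because each of the three terms becomes the same cubic
sum after renaming indices. For the diagonal Schwarzschild metric `g(ξ̇, ξ̇)` is the displayed
pseudo-norm, and the radial equation is the normalisation `q = 1` solved for `ṙ²`.
-/

noncomputable section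

lemma Convex.eq_of_hasDerivWithinAt_zero {E : Type*} [NormedAddCommGroup E] [NormedSpace ℝ E]
    {I : Set ℝ} (hI : Convex ℝ I) {f : ℝ → E} (hf : ∀ s ∈ I, HasDerivWithinAt f 0 I s)
    {s s' : ℝ} (hs : s ∈ I) (hs' : s' ∈ I) : f s = f s' := by
  have h := hI.norm_image_sub_le_of_norm_hasDerivWithin_le hf (C := 0) (by simp) hs' hs
  rwa [zero_mul, norm_le_zero_iff, sub_eq_zero] at h

section Metric

open Finset Matrix

variable {n : ℕ} (g : (Fin n → ℝ) → Matrix (Fin n) (Fin n) ℝ)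

def pseudoNorm (p v : Fin n → ℝ) : ℝ :=
  ∑ i, ∑ j, g p i j * v i * v j

lemma fderiv_apply_eq_sum_coordPDeriv (f : (Fin n → ℝ) → ℝ) (p v : Fin n → ℝ) :
    fderiv ℝ f p v = ∑ k, coordPDeriv f k p * v k := by
  conv_lhs => rw [← univ_sum_single v, map_sum]
  refine sum_congr rfl fun k _ => ?_
  rw [coordPDeriv, mul_comm, ← smul_eq_mul, ← map_smul, ← Pi.single_smul', smul_eq_mul, mul_one]

variable {g} {p : Fin n → ℝ}

lemma sum_mul_christoffel (hg : IsUnit (g p).det) (m i j : Fin n) :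
    ∑ k, g p m k * christoffel g k i j p =
      1 / 2 * (coordPDeriv (fun q => g q j m) i p + coordPDeriv (fun q => g q i m) j p
        - coordPDeriv (fun q => g q i j) m p) := by
  set D : Fin n → ℝ := fun l => coordPDeriv (fun q => g q j l) i p
    + coordPDeriv (fun q => g q i l) j p - coordPDeriv (fun q => g q i j) l p
  have hΓ : ∀ k, christoffel g k i j p = 1 / 2 * ((g p)⁻¹ *ᵥ D) k := fun k => rfl
  simp_rw [hΓ, mul_left_comm _ (1 / 2 : ℝ), ← mul_sum]
  change 1 / 2 * (g p *ᵥ ((g p)⁻¹ *ᵥ D)) m = 1 / 2 * D m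
  rw [mulVec_mulVec, mul_nonsing_inv _ hg, one_mulVec]

lemma two_mul_sum_metric_mul_geodesic_accel (hg : IsUnit (g p).det) {v a : Fin n → ℝ}
    (ha : ∀ k, a k + ∑ i, ∑ j, christoffel g k i j p * v i * v j = 0) :
    2 * ∑ m, ∑ k, g p m k * v m * a k =
      -∑ k, ∑ i, ∑ j, coordPDeriv (fun q => g q i j) k p * v k * v i * v j := by
  set T : Fin n → Fin n → Fin n → ℝ := fun k i j =>
    coordPDeriv (fun q => g q i j) k p * v k * v i * v j
  have hlower : ∀ m, ∑ k, g p m k * v m * a k =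
      -(1 / 2) * ∑ i, ∑ j, (T i j m + T j i m - T m i j) := fun m => by
    calc ∑ k, g p m k * v m * a k
        = -(v m * ∑ k, ∑ i, ∑ j, g p m k * christoffel g k i j p * v i * v j) := by
          simp only [fun k => eq_neg_of_add_eq_zero_left (ha k), mul_sum, ← sum_neg_distrib]
          refine sum_congr rfl fun k _ => sum_congr rfl fun i _ => sum_congr rfl fun j _ => ?_
          ring
      _ = -(v m * ∑ i, ∑ j, (∑ k, g p m k * christoffel g k i j p) * v i * v j) := by
          simp_rw [sum_mul]
          rw [sum_comm]
          exact congrArg _ (congrArg _ (sum_congr rfl fun _ _ => sum_comm))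
      _ = -(1 / 2) * ∑ i, ∑ j, (T i j m + T j i m - T m i j) := by
          simp only [sum_mul_christoffel hg, mul_sum, ← sum_neg_distrib]
          refine sum_congr rfl fun i _ => sum_congr rfl fun j _ => ?_
          ring
  have hT₁ : ∑ m, ∑ i, ∑ j, T i j m = ∑ k, ∑ i, ∑ j, T k i j := by
    rw [sum_comm]
    exact sum_congr rfl fun _ _ => sum_comm
  have hT₂ : ∑ m, ∑ i, ∑ j, T j i m = ∑ k, ∑ i, ∑ j, T k i j := by
    calc ∑ m, ∑ i, ∑ j, T j i m = ∑ m, ∑ j, ∑ i, T j i m := sum_congr rfl fun _ _ => sum_comm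
      _ = ∑ k, ∑ i, ∑ j, T k i j := by
        rw [sum_comm]
        exact sum_congr rfl fun _ _ => sum_comm
  simp_rw [hlower, ← mul_sum, sum_sub_distrib, sum_add_distrib, hT₁, hT₂]
  ring

lemma hasDerivWithinAt_pseudoNorm {ξ ξ' : ℝ → Fin n → ℝ} {a : Fin n → ℝ} {I : Set ℝ} {s : ℝ}
    (hsymm : (g (ξ s)).IsSymm) (hdiff : ∀ i j, DifferentiableAt ℝ (fun q => g q i j) (ξ s))
    (hξ : HasDerivWithinAt ξ (ξ' s) I s) (hξ' : HasDerivWithinAt ξ' a I s) :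
    HasDerivWithinAt (fun u => pseudoNorm g (ξ u) (ξ' u))
      (∑ k, ∑ i, ∑ j, coordPDeriv (fun q => g q i j) k (ξ s) * ξ' s k * ξ' s i * ξ' s j
        + 2 * ∑ m, ∑ k, g (ξ s) m k * ξ' s m * a k) I s := by
  have hv := hasDerivWithinAt_pi.1 hξ'
  have hgξ : ∀ i j, HasDerivWithinAt (fun u => g (ξ u) i j)
      (∑ k, coordPDeriv (fun q => g q i j) k (ξ s) * ξ' s k) I s := fun i j => by
    rw [← fderiv_apply_eq_sum_coordPDeriv]
    exact (hdiff i j).hasFDerivAt.comp_hasDerivWithinAt s hξ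
  refine (HasDerivWithinAt.fun_sum fun i _ => HasDerivWithinAt.fun_sum fun j _ =>
    ((hgξ i j).mul (hv i)).mul (hv j)).congr_deriv ?_
  have hD : ∑ i, ∑ j, (∑ k, coordPDeriv (fun q => g q i j) k (ξ s) * ξ' s k) * ξ' s i * ξ' s j
      = ∑ k, ∑ i, ∑ j, coordPDeriv (fun q => g q i j) k (ξ s) * ξ' s k * ξ' s i * ξ' s j := by
    simp_rw [sum_mul]
    calc _ = ∑ i, ∑ k, ∑ j, coordPDeriv (fun q => g q i j) k (ξ s) * ξ' s k * ξ' s i * ξ' s j :=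
          sum_congr rfl fun _ _ => sum_comm
      _ = _ := sum_comm
  have hswap : ∑ i, ∑ j, g (ξ s) i j * a i * ξ' s j = ∑ m, ∑ k, g (ξ s) m k * ξ' s m * a k := by
    rw [sum_comm]
    refine sum_congr rfl fun m _ => sum_congr rfl fun k _ => ?_
    rw [hsymm.apply]
    ring
  rw [two_mul, ← hD]
  nth_rw 1 [← hswap]
  simp only [← sum_add_distrib]
  refine sum_congr rfl fun i _ => sum_congr rfl fun j _ => ?_
  simp only [Pi.mul_apply]
  ring

theorem pseudoNorm_eq_of_geodesic {U : Set (Fin n → ℝ)} (hsymm : ∀ p ∈ U, (g p).IsSymm)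
    (hg : ∀ p ∈ U, IsUnit (g p).det)
    (hdiff : ∀ p ∈ U, ∀ i j, DifferentiableAt ℝ (fun q => g q i j) p)
    {I : Set ℝ} (hI : I.OrdConnected) {ξ ξ' ξ'' : ℝ → Fin n → ℝ} (hmem : ∀ s ∈ I, ξ s ∈ U)
    (hξ' : ∀ s ∈ I, HasDerivWithinAt ξ (ξ' s) I s)
    (hξ'' : ∀ s ∈ I, HasDerivWithinAt ξ' (ξ'' s) I s)
    (hgeo : ∀ s ∈ I, ∀ k, ξ'' s k + ∑ i, ∑ j, christoffel g k i j (ξ s) * ξ' s i * ξ' s j = 0)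
    {s s' : ℝ} (hs : s ∈ I) (hs' : s' ∈ I) :
    pseudoNorm g (ξ s) (ξ' s) = pseudoNorm g (ξ s') (ξ' s') := by
  refine hI.convex.eq_of_hasDerivWithinAt_zero (f := fun u => pseudoNorm g (ξ u) (ξ' u))
    (fun u hu => ?_) hs hs'
  have h := hasDerivWithinAt_pseudoNorm (hsymm _ (hmem u hu)) (hdiff _ (hmem u hu))
    (hξ' u hu) (hξ'' u hu)
  rwa [two_mul_sum_metric_mul_geodesic_accel (hg _ (hmem u hu)) (hgeo u hu),
    add_neg_cancel] at h

end Metric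

section Schwarzschild

open Matrix

variable {R : ℝ} {p : Fin 4 → ℝ}

lemma radius_pos_of_mem_sphDomain (hR : 0 < R) (hp : p ∈ sphDomain R) : 0 < p 1 :=
  hR.trans hp.1

lemma one_sub_div_pos_of_mem_sphDomain (hR : 0 < R) (hp : p ∈ sphDomain R) :
    0 < 1 - R / p 1 :=
  sub_pos.2 <| (div_lt_one (radius_pos_of_mem_sphDomain hR hp)).2 hp.1

lemma sin_pos_of_mem_sphDomain (hp : p ∈ sphDomain R) : 0 < Real.sin (p 2) :=
  Real.sin_pos_of_pos_of_lt_pi hp.2.1 hp.2.2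

lemma schwMetric_isSymm (R : ℝ) (p : Fin 4 → ℝ) : (schwMetric R p).IsSymm :=
  isSymm_diagonal _

lemma isUnit_det_schwMetric (hR : 0 < R) (hp : p ∈ sphDomain R) :
    IsUnit (schwMetric R p).det := by
  have hr := (radius_pos_of_mem_sphDomain hR hp).ne'
  have hf := (one_sub_div_pos_of_mem_sphDomain hR hp).ne'
  have hsin := (sin_pos_of_mem_sphDomain hp).ne'
  simp [schwMetric, Fin.prod_univ_four, hr, hf, hsin]

lemma differentiableAt_schwMetric_apply (hR : 0 < R) (hp : p ∈ sphDomain R) (i j : Fin 4) :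
    DifferentiableAt ℝ (fun q => schwMetric R q i j) p := by
  have hr := (radius_pos_of_mem_sphDomain hR hp).ne'
  have hf := (one_sub_div_pos_of_mem_sphDomain hR hp).ne'
  simp only [schwMetric, diagonal_apply]
  split_ifs with hij
  · subst hij
    fin_cases i <;>
      simp only [Fin.zero_eta, Fin.mk_one, Fin.reduceFinMk, cons_val_zero, cons_val_one, cons_val] <;>
      fun_prop (disch := assumption)
  · exact differentiableAt_const 0

lemma pseudoNorm_schwMetric (R : ℝ) (p v : Fin 4 → ℝ) :
    pseudoNorm (schwMetric R) p v = (1 - R / p 1) * v 0 ^ 2 - (1 - R / p 1)⁻¹ * v 1 ^ 2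
      - p 1 ^ 2 * (v 2 ^ 2 + Real.sin (p 2) ^ 2 * v 3 ^ 2) := by
  simp only [pseudoNorm, schwMetric, diagonal_apply, ite_mul, zero_mul, Finset.sum_ite_eq,
    Finset.mem_univ, if_true, Fin.sum_univ_four, cons_val_zero, cons_val_one, cons_val]
  ring

lemma sq_radial_speed_eq_of_pseudoNorm_eq_one {v : Fin 4 → ℝ} (hf : 1 - R / p 1 ≠ 0)
    (h : pseudoNorm (schwMetric R) p v = 1) :
    v 1 ^ 2 = ((1 - R / p 1) * v 0) ^ 2 - (1 - R / p 1) *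
      (1 + (p 1 ^ 2 * √(v 2 ^ 2 + Real.sin (p 2) ^ 2 * v 3 ^ 2)) ^ 2 / p 1 ^ 2) := by
  rw [pseudoNorm_schwMetric] at h
  rw [mul_pow (p 1 ^ 2), Real.sq_sqrt (by positivity)]
  field_simp at h ⊢
  linear_combination -h

end Schwarzschild

theorem schwarzschild_geodesic_pseudo_norm_general
    (R : ℝ) (hR : 0 < R) (I : Set ℝ) (hI : I.OrdConnected)
    (ξ ξ' ξ'' : ℝ → Fin 4 → ℝ)
    (hmem : ∀ s ∈ I, ξ s ∈ sphDomain R)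
    (hξ' : ∀ s ∈ I, HasDerivWithinAt ξ (ξ' s) I s)
    (hξ'' : ∀ s ∈ I, HasDerivWithinAt ξ' (ξ'' s) I s)
    (hgeo : ∀ s ∈ I, ∀ k : Fin 4,
      ξ'' s k + ∑ i, ∑ j, christoffel (schwMetric R) k i j (ξ s) * ξ' s i * ξ' s j = 0) :
    (∀ s ∈ I, ∀ s' ∈ I,
      (1 - R / ξ s 1) * (ξ' s 0) ^ 2 - (1 - R / ξ s 1)⁻¹ * (ξ' s 1) ^ 2
          - (ξ s 1) ^ 2 * ((ξ' s 2) ^ 2 + Real.sin (ξ s 2) ^ 2 * (ξ' s 3) ^ 2)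
        = (1 - R / ξ s' 1) * (ξ' s' 0) ^ 2 - (1 - R / ξ s' 1)⁻¹ * (ξ' s' 1) ^ 2
          - (ξ s' 1) ^ 2 * ((ξ' s' 2) ^ 2 + Real.sin (ξ s' 2) ^ 2 * (ξ' s' 3) ^ 2)) ∧
    ((∀ s ∈ I,
        (1 - R / ξ s 1) * (ξ' s 0) ^ 2 - (1 - R / ξ s 1)⁻¹ * (ξ' s 1) ^ 2
          - (ξ s 1) ^ 2 * ((ξ' s 2) ^ 2 + Real.sin (ξ s 2) ^ 2 * (ξ' s 3) ^ 2) = 1) →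
      ∀ s ∈ I,
        (ξ' s 1) ^ 2 = ((1 - R / ξ s 1) * ξ' s 0) ^ 2
          - (1 - R / ξ s 1) *
            (1 + ((ξ s 1) ^ 2 *
              Real.sqrt ((ξ' s 2) ^ 2 + Real.sin (ξ s 2) ^ 2 * (ξ' s 3) ^ 2)) ^ 2
                / (ξ s 1) ^ 2)) := by
  refine ⟨fun s hs s' hs' => ?_, fun hunit s hs => ?_⟩
  · simpa only [pseudoNorm_schwMetric] using
      pseudoNorm_eq_of_geodesic (fun p _ => schwMetric_isSymm R p)
        (fun _ hp => isUnit_det_schwMetric hR hp)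
        (fun _ hp => differentiableAt_schwMetric_apply hR hp) hI hmem hξ' hξ'' hgeo hs hs'
  · exact sq_radial_speed_eq_of_pseudoNorm_eq_one
      (one_sub_div_pos_of_mem_sphDomain hR (hmem s hs)).ne'
      ((pseudoNorm_schwMetric R _ _).trans (hunit s hs))

/-- Along any C² geodesic `ξ = (t, r, φ, ψ)` of the Schwarzschild metric with values in
the chart `Ω_sph`, the pseudo-norm
`q = (1 − R/r)·ṫ² − (1 − R/r)⁻¹·ṙ² − r²·(φ̇² + sin²φ·ψ̇²)` is constant; moreover if
`q ≡ 1` then `ṙ² = a² − (1 − R/r)·(1 + b²/r²)`, where `a = (1 − R/r)·ṫ` and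
`b = r²·√(φ̇² + sin²φ·ψ̇²)` are the first integrals of the motion. -/
theorem schwarzschild_geodesic_pseudo_norm
    (R : ℝ) (hR : 0 < R) (I : Set ℝ) (hI : I.OrdConnected)
    (ξ ξ' ξ'' : ℝ → Fin 4 → ℝ)
    (hmem : ∀ s ∈ I, ξ s ∈ sphDomain R)
    (hξ' : ∀ s ∈ I, HasDerivWithinAt ξ (ξ' s) I s)
    (hξ'' : ∀ s ∈ I, HasDerivWithinAt ξ' (ξ'' s) I s)
    (hC2 : ContinuousOn ξ'' I)
    (hgeo : ∀ s ∈ I, ∀ k : Fin 4,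
      ξ'' s k + ∑ i, ∑ j, christoffel (schwMetric R) k i j (ξ s) * ξ' s i * ξ' s j = 0) :
    (∀ s ∈ I, ∀ s' ∈ I,
      (1 - R / ξ s 1) * (ξ' s 0) ^ 2 - (1 - R / ξ s 1)⁻¹ * (ξ' s 1) ^ 2
          - (ξ s 1) ^ 2 * ((ξ' s 2) ^ 2 + Real.sin (ξ s 2) ^ 2 * (ξ' s 3) ^ 2)
        = (1 - R / ξ s' 1) * (ξ' s' 0) ^ 2 - (1 - R / ξ s' 1)⁻¹ * (ξ' s' 1) ^ 2
          - (ξ s' 1) ^ 2 * ((ξ' s' 2) ^ 2 + Real.sin (ξ s' 2) ^ 2 * (ξ' s' 3) ^ 2)) ∧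
    ((∀ s ∈ I,
        (1 - R / ξ s 1) * (ξ' s 0) ^ 2 - (1 - R / ξ s 1)⁻¹ * (ξ' s 1) ^ 2
          - (ξ s 1) ^ 2 * ((ξ' s 2) ^ 2 + Real.sin (ξ s 2) ^ 2 * (ξ' s 3) ^ 2) = 1) →
      ∀ s ∈ I,
        (ξ' s 1) ^ 2 = ((1 - R / ξ s 1) * ξ' s 0) ^ 2
          - (1 - R / ξ s 1) *
            (1 + ((ξ s 1) ^ 2 *
              Real.sqrt ((ξ' s 2) ^ 2 + Real.sin (ξ s 2) ^ 2 * (ξ' s 3) ^ 2)) ^ 2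
                / (ξ s 1) ^ 2)) :=
  schwarzschild_geodesic_pseudo_norm_general R hR I hI ξ ξ' ξ'' hmem hξ' hξ'' hgeo
end
end
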